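/- In the Soccer Ball Graph, every Identifying Code Set contains at least 4 vertices from the top half (layers L1–L3) and at least 4 vertices from the bottom half (layers L4–L6). -/

import Mathlib

/-- Vertices of the Soccer Ball Graph: 12 pentagonal vertices
(`P1`, `P3 j`, `P4 j`, `P6`) and 20 hexagonal vertices
(`H2 j`, `H3 j`, `H4 j`, `H5 j`), indices `j : Fin 5` taken cyclically. -/
inductive SBGVertex : Type
  | P1 : SBGVertex
  | P3 : Fin 5 → SBGVertex
  | P4 : Fin 5 → SBGVertex
  | P6 : SBGVertex
  | H2 : Fin 5 → SBGVertex
  | H3 : Fin 5 → SBGVertex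
  | H4 : Fin 5 → SBGVertex
  | H5 : Fin 5 → SBGVertex
  deriving DecidableEq, Fintype

open SBGVertex

/-- One direction of each of the 17 edge families E1–E17 (indices mod 5). -/
def sbgRel : SBGVertex → SBGVertex → Bool
  | P1, H2 _ => true                                -- E1
  | P6, H5 _ => true                                -- E2
  | H2 j, H2 k => k == j + 1                        -- E3 (i = 2)
  | H5 j, H5 k => k == j + 1                        -- E3 (i = 5)
  | H3 j, P3 k => k == j                            -- E4
  | P3 j, H3 k => k == j + 1                        -- E5
  | H4 j, P4 k => k == j + 1                        -- E6
  | P4 j, H4 k => k == j                            -- E7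
  | H2 j, H3 k => k == j                            -- E8
  | H2 j, P3 k => k == j - 1 || k == j              -- E9, E10
  | H3 j, P4 k => k == j                            -- E11
  | H3 j, H4 k => k == j - 1 || k == j              -- E12, E13
  | P3 j, H4 k => k == j                            -- E14
  | H4 j, H5 k => k == j                            -- E15
  | P4 j, H5 k => k == j - 1 || k == j              -- E16, E17
  | _, _ => false

/-- The Soccer Ball Graph. -/
def SBG : SimpleGraph SBGVertex where
  Adj v w := v ≠ w ∧ (sbgRel v w || sbgRel w v)
  symm := by
    constructor; intro v w h
    exact ⟨h.1.symm, by have := h.2; rwa [Bool.or_comm]⟩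
  loopless := by constructor; intro v h; exact h.1 rfl

instance : DecidableRel SBG.Adj := fun v w =>
  inferInstanceAs (Decidable (v ≠ w ∧ (sbgRel v w || sbgRel w v) = true))

/-- Closed neighborhood `N⁺(v)` of a vertex of the SBG. -/
def closedNbhd (v : SBGVertex) : Finset SBGVertex :=
  Finset.univ.filter fun u => u = v ∨ SBG.Adj v u

/-- `V'` is an Identifying Code Set of the SBG. -/
def IsICS (V' : Finset SBGVertex) : Prop :=
  ∀ v w : SBGVertex, v ≠ w → closedNbhd v ∩ V' ≠ closedNbhd w ∩ V'

/-- Membership in the top half (layers L1–L3) of the SBG. -/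
def inTopHalf : SBGVertex → Bool
  | P1 => true | H2 _ => true | H3 _ => true | P3 _ => true
  | _ => false

/-- The top half L1 ∪ L2 ∪ L3 of the SBG. -/
def topHalf : Finset SBGVertex := Finset.univ.filter fun v => inTopHalf v

/-- The bottom half L4 ∪ L5 ∪ L6 of the SBG. -/
def bottomHalf : Finset SBGVertex := Finset.univ.filter fun v => ¬ inTopHalf v

/-- Membership in layers L1 ∪ L2. -/
def inL12 : SBGVertex → Bool
  | P1 => true | H2 _ => true
  | _ => false

/-- Layers L1 ∪ L2 of the SBG. -/
def L12 : Finset SBGVertex := Finset.univ.filter fun v => inL12 v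

/-!
The closed neighbourhoods of the six vertices of L1 ∪ L2 lie in the top half, so an identifying
code must tell these six vertices apart using its top-half vertices alone. An exhaustive check
shows that no three top-half vertices do so, and a code with at most three top-half vertices can
be padded to exactly three. The bottom half is symmetric, with L5 ∪ L6 in place of L1 ∪ L2.
-/

open Finset

def L56 : Finset SBGVertex := insert P6 (univ.image H5)

/-- Membership in `closedNbhd v`, in a form the kernel evaluates quickly. -/
def closedAdj (v x : SBGVertex) : Bool := x == v || sbgRel v x || sbgRel x v

theorem mem_closedNbhd_iff {v x : SBGVertex} : x ∈ closedNbhd v ↔ closedAdj v x := by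
  simp only [closedNbhd, mem_filter, mem_univ, true_and, SBG, closedAdj, Bool.or_eq_true,
    beq_iff_eq]
  by_cases h : x = v
  · simp [h]
  · simp [h, Ne.symm h]

theorem closedNbhd_inter_eq_of_closedAdj_eq {v w : SBGVertex} {Y : Finset SBGVertex}
    (h : ∀ y ∈ Y, closedAdj v y = closedAdj w y) : closedNbhd v ∩ Y = closedNbhd w ∩ Y := by
  ext y
  simp only [mem_inter, mem_closedNbhd_iff]
  exact ⟨fun ⟨hv, hy⟩ => ⟨h y hy ▸ hv, hy⟩, fun ⟨hw, hy⟩ => ⟨(h y hy).symm ▸ hw, hy⟩⟩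

theorem closedNbhd_subset_topHalf : ∀ v ∈ L12, closedNbhd v ⊆ topHalf := by
  have h : ∀ v ∈ L12, ∀ x, closedAdj v x → inTopHalf x := by decide
  intro v hv x hx
  simpa [topHalf] using h v hv x (mem_closedNbhd_iff.mp hx)

theorem closedNbhd_subset_bottomHalf : ∀ v ∈ L56, closedNbhd v ⊆ bottomHalf := by
  have h : ∀ v ∈ L56, ∀ x, closedAdj v x → inTopHalf x = false := by decide
  intro v hv x hx
  simpa [bottomHalf] using h v hv x (mem_closedNbhd_iff.mp hx)

def NotSeparatedByThree (S T : Finset SBGVertex) : Prop :=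
  ∀ a ∈ T, ∀ b ∈ T, ∀ c ∈ T, ∃ v ∈ S, ∃ w ∈ S, v ≠ w ∧
    closedAdj v a = closedAdj w a ∧ closedAdj v b = closedAdj w b ∧ closedAdj v c = closedAdj w c

theorem notSeparatedByThree_L12_topHalf : NotSeparatedByThree L12 topHalf := by
  unfold NotSeparatedByThree
  decide +kernel

theorem notSeparatedByThree_L56_bottomHalf : NotSeparatedByThree L56 bottomHalf := by
  unfold NotSeparatedByThree
  decide +kernel

theorem inter_eq_inter_inter_of_subset {α : Type*} [DecidableEq α] {s u t Y : Finset α}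
    (hs : s ⊆ t) (hY : u ∩ t ⊆ Y) : s ∩ u = s ∩ Y ∩ (u ∩ t) := by
  ext x
  simp only [mem_inter]
  constructor
  · rintro ⟨hx, hu⟩
    exact ⟨⟨hx, hY (mem_inter.2 ⟨hu, hs hx⟩)⟩, hu, hs hx⟩
  · rintro ⟨⟨hx, -⟩, hu, -⟩
    exact ⟨hx, hu⟩

theorem IsICS.four_le_card_inter {V' S T : Finset SBGVertex} (hV' : IsICS V')
    (hST : ∀ v ∈ S, closedNbhd v ⊆ T) (hT : 3 ≤ #T) (hS : NotSeparatedByThree S T) :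
    4 ≤ #(V' ∩ T) := by
  by_contra! hcard
  obtain ⟨Y, hVY, hYT, hY⟩ :=
    exists_subsuperset_card_eq inter_subset_right (Nat.le_of_lt_succ hcard) hT
  obtain ⟨a, b, c, -, -, -, rfl⟩ := card_eq_three.mp hY
  obtain ⟨v, hv, w, hw, hvw, ha, hb, hc⟩ :=
    hS a (hYT (by simp)) b (hYT (by simp)) c (hYT (by simp))
  refine hV' v w hvw ?_
  calc closedNbhd v ∩ V' = closedNbhd v ∩ {a, b, c} ∩ (V' ∩ T) :=
        inter_eq_inter_inter_of_subset (hST v hv) hVY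
    _ = closedNbhd w ∩ {a, b, c} ∩ (V' ∩ T) := by
        rw [closedNbhd_inter_eq_of_closedAdj_eq (w := w) (by simp [ha, hb, hc])]
    _ = closedNbhd w ∩ V' := (inter_eq_inter_inter_of_subset (hST w hw) hVY).symm

/-- Every ICS of the SBG contains at least 4 vertices from the top half
(layers L1–L3) and at least 4 vertices from the bottom half (layers L4–L6). -/
theorem sbg_ics_four_from_each_half (V' : Finset SBGVertex) (h : IsICS V') :
    4 ≤ (V' ∩ topHalf).card ∧ 4 ≤ (V' ∩ bottomHalf).card :=
  ⟨h.four_le_card_inter closedNbhd_subset_topHalf (by decide) notSeparatedByThree_L12_topHalf,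
    h.four_le_card_inter closedNbhd_subset_bottomHalf (by decide)
      notSeparatedByThree_L56_bottomHalf⟩
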